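/- Let p > 0 with 2/p ∈ ℕ, ω ≥ 0, γ > 0, and x ∈ ℝ² \ {0}. Then J_{ω+γ}^{[p]}(x) = (|x|_p^γ/(p^{γ−1}Γ(γ))) · ∫₀¹ J_ω^{[p]}(τx)·τ^{(p−1)ω+1}·(1−τ^p)^{γ−1} dτ. -/

import Mathlib

/-! Expanding `J_ω^{[p]}(τx)` in its series, the `k`-th term of the integrand is a constant
times `τ^(2k+pω+1) (1-τ^p)^(γ-1)`, whose integral over `[0,1]` is, after the substitution
`u = τ^p`, `B(2(k+1)/p + ω, γ) / p`. The factor `Γ(2(k+1)/p + ω)` of this Beta value cancels the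
denominator of the `k`-th term of `J_ω` and leaves that of `J_{ω+γ}`. Termwise integration is
legitimate because the series of `J_{ω+γ}` converges absolutely:
`Γ(a)Γ(b)/Γ(a+b+β) = B(a,b) B(a+b,β) / Γ(β)` and the Beta function is antitone in each argument,
so the coefficients are dominated by those of the Cauchy product of two `cosh` series. -/

/-- The `p`-norm on `ℝ²`. -/
noncomputable def pnorm (p : ℝ) (x : ℝ × ℝ) : ℝ := (|x.1| ^ p + |x.2| ^ p) ^ (1 / p)

/-- The generalized Bessel function `J_ω^{[p]}` on `ℝ²`, via its series representation. -/
noncomputable def genBesselJ (p ω : ℝ) (x : ℝ × ℝ) : ℝ :=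
  (pnorm p x / p) ^ ω * (2 / p) ^ 2 / Real.Gamma (1 / p) ^ 2 *
    ∑' k : ℕ, ((-1 : ℝ) ^ k / Real.Gamma ((2 / p) * ((k : ℝ) + 1) + ω)) *
      ∑ n ∈ Finset.range (k + 1),
        Real.Gamma ((2 * (n : ℝ) + 1) / p) * Real.Gamma ((2 * ((k - n : ℕ) : ℝ) + 1) / p) /
            ((Nat.factorial (2 * n) : ℝ) * (Nat.factorial (2 * (k - n)) : ℝ)) *
          x.1 ^ (2 * n) * x.2 ^ (2 * (k - n))

open MeasureTheory Set ProbabilityTheory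

lemma ofReal_rpow_mul_one_sub_rpow {a b t : ℝ} (ht : t ∈ Icc (0 : ℝ) 1) :
    ((t ^ (a - 1) * (1 - t) ^ (b - 1) : ℝ) : ℂ) =
      (t : ℂ) ^ ((a : ℂ) - 1) * (1 - (t : ℂ)) ^ ((b : ℂ) - 1) := by
  push_cast [Complex.ofReal_cpow ht.1, Complex.ofReal_cpow (sub_nonneg.2 ht.2)]
  rfl

lemma intervalIntegrable_rpow_mul_one_sub_rpow {a b : ℝ} (ha : 0 < a) (hb : 0 < b) :
    IntervalIntegrable (fun t : ℝ => t ^ (a - 1) * (1 - t) ^ (b - 1)) volume 0 1 := by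
  have hℂ := Complex.betaIntegral_convergent (u := a) (v := b) (by simpa) (by simpa)
  refine hℂ.norm.congr_uIoo fun t ht => ?_
  rw [uIoo_of_le zero_le_one] at ht
  simp only
  rw [← ofReal_rpow_mul_one_sub_rpow (Ioo_subset_Icc_self ht), Complex.norm_real,
    Real.norm_of_nonneg]
  exact mul_nonneg (Real.rpow_nonneg ht.1.le _) (Real.rpow_nonneg (sub_nonneg.2 ht.2.le) _)

lemma integral_rpow_mul_one_sub_rpow {a b : ℝ} (ha : 0 < a) (hb : 0 < b) :
    ∫ t in (0 : ℝ)..1, t ^ (a - 1) * (1 - t) ^ (b - 1) = beta a b := by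
  have h : Complex.betaIntegral a b =
      ↑(∫ t in (0 : ℝ)..1, t ^ (a - 1) * (1 - t) ^ (b - 1)) := by
    rw [← intervalIntegral.integral_ofReal, Complex.betaIntegral]
    refine intervalIntegral.integral_congr fun t ht => ?_
    rw [uIcc_of_le zero_le_one] at ht
    exact (ofReal_rpow_mul_one_sub_rpow ht).symm
  rw [beta_eq_betaIntegralReal a b ha hb, h, Complex.ofReal_re]

lemma beta_le_beta {a a' b b' : ℝ} (ha' : 0 < a') (haa : a' ≤ a) (hb' : 0 < b')
    (hbb : b' ≤ b) :
    beta a b ≤ beta a' b' := by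
  rw [← integral_rpow_mul_one_sub_rpow (ha'.trans_le haa) (hb'.trans_le hbb),
    ← integral_rpow_mul_one_sub_rpow ha' hb']
  refine intervalIntegral.integral_mono_on_of_le_Ioo zero_le_one
    (intervalIntegrable_rpow_mul_one_sub_rpow (ha'.trans_le haa) (hb'.trans_le hbb))
    (intervalIntegrable_rpow_mul_one_sub_rpow ha' hb') fun t ht => ?_
  have h1t : 0 < 1 - t := sub_pos.2 ht.2
  exact mul_le_mul (Real.rpow_le_rpow_of_exponent_ge ht.1 ht.2.le (by linarith))
    (Real.rpow_le_rpow_of_exponent_ge h1t (by linarith [ht.1]) (by linarith))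
    (Real.rpow_nonneg h1t.le _) (Real.rpow_nonneg ht.1.le _)

section RpowSubstitution

variable {E : Type*} [NormedAddCommGroup E] [NormedSpace ℝ E] {p : ℝ}

lemma rpow_mem_Ioo_zero_one_iff (hp : 0 < p) {τ : ℝ} (hτ : 0 < τ) :
    τ ^ p ∈ Ioo (0 : ℝ) 1 ↔ τ ∈ Ioo (0 : ℝ) 1 := by
  simp only [mem_Ioo, Real.rpow_pos_of_pos hτ, hτ, true_and]
  simpa using Real.rpow_lt_rpow_iff hτ.le zero_le_one hp

lemma smul_indicator_Ioo_comp_rpow (hp : 0 < p) (g : ℝ → E) {τ : ℝ} (hτ : 0 < τ) :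
    (p * τ ^ (p - 1)) • (Ioo 0 1).indicator g (τ ^ p) =
      (Ioo 0 1).indicator (fun τ => (p * τ ^ (p - 1)) • g (τ ^ p)) τ := by
  by_cases h : τ ∈ Ioo (0 : ℝ) 1
  · rw [indicator_of_mem ((rpow_mem_Ioo_zero_one_iff hp hτ).2 h), indicator_of_mem h]
  · rw [indicator_of_notMem (mt (rpow_mem_Ioo_zero_one_iff hp hτ).1 h), indicator_of_notMem h,
      smul_zero]

lemma integrableOn_Ioo_comp_rpow_iff (hp : 0 < p) (g : ℝ → E) :
    IntegrableOn (fun τ => (p * τ ^ (p - 1)) • g (τ ^ p)) (Ioo 0 1) ↔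
      IntegrableOn g (Ioo 0 1) := by
  have hIoo : Ioo (0 : ℝ) 1 ∩ Ioi 0 = Ioo 0 1 := inter_eq_left.2 Ioo_subset_Ioi_self
  rw [← hIoo, ← integrableOn_indicator_iff measurableSet_Ioo, ← integrableOn_indicator_iff
    measurableSet_Ioo, ← integrableOn_Ioi_comp_rpow_iff ((Ioo 0 1).indicator g) hp.ne',
    abs_of_pos hp]
  exact integrableOn_congr_fun (fun τ hτ => (smul_indicator_Ioo_comp_rpow hp g hτ).symm)
    measurableSet_Ioi

lemma integral_Ioo_comp_rpow (hp : 0 < p) (g : ℝ → E) :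
    ∫ τ in Ioo 0 1, (p * τ ^ (p - 1)) • g (τ ^ p) = ∫ u in Ioo 0 1, g u := by
  have hIoo : Ioi (0 : ℝ) ∩ Ioo 0 1 = Ioo 0 1 := inter_eq_right.2 Ioo_subset_Ioi_self
  rw [← hIoo, ← setIntegral_indicator measurableSet_Ioo,
    ← setIntegral_indicator measurableSet_Ioo,
    ← integral_comp_rpow_Ioi_of_pos hp (g := (Ioo 0 1).indicator g)]
  exact setIntegral_congr_fun measurableSet_Ioi fun τ hτ =>
    (smul_indicator_Ioo_comp_rpow hp g hτ).symm

end RpowSubstitution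

section BetaSubstitution

variable {p c γ : ℝ}

lemma rpow_mul_one_sub_rpow_eq_comp_rpow (hp : 0 < p) {τ : ℝ} (hτ : 0 < τ) :
    τ ^ c * (1 - τ ^ p) ^ (γ - 1) =
      p⁻¹ * ((p * τ ^ (p - 1)) •
        ((τ ^ p) ^ ((c + 1) / p - 1) * (1 - τ ^ p) ^ (γ - 1))) := by
  have hexp : τ ^ (p - 1) * (τ ^ p) ^ ((c + 1) / p - 1) = τ ^ c := by
    rw [← Real.rpow_mul hτ.le, ← Real.rpow_add hτ]
    congr 1
    field_simp
    ring
  rw [smul_eq_mul, ← mul_assoc, ← mul_assoc, inv_mul_cancel_left₀ hp.ne', ← hexp, mul_assoc]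

lemma integrableOn_rpow_mul_one_sub_rpow_rpow (hp : 0 < p) (hc : -1 < c) (hγ : 0 < γ) :
    IntegrableOn (fun τ : ℝ => τ ^ c * (1 - τ ^ p) ^ (γ - 1)) (Ioc 0 1) := by
  have ha : 0 < (c + 1) / p := div_pos (by linarith) hp
  have hbeta := ((intervalIntegrable_rpow_mul_one_sub_rpow ha hγ).1.mono_set Ioo_subset_Ioc_self)
  rw [← integrableOn_Ioo_comp_rpow_iff hp] at hbeta
  rw [integrableOn_Ioc_iff_integrableOn_Ioo]
  exact IntegrableOn.congr_fun (hbeta.const_mul p⁻¹)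
    (fun τ hτ => (rpow_mul_one_sub_rpow_eq_comp_rpow hp hτ.1).symm) measurableSet_Ioo

lemma integral_rpow_mul_one_sub_rpow_rpow (hp : 0 < p) (hc : -1 < c) (hγ : 0 < γ) :
    ∫ τ in Ioc 0 1, τ ^ c * (1 - τ ^ p) ^ (γ - 1) = beta ((c + 1) / p) γ / p := by
  have ha : 0 < (c + 1) / p := div_pos (by linarith) hp
  rw [integral_Ioc_eq_integral_Ioo, setIntegral_congr_fun measurableSet_Ioo
    (fun τ hτ => rpow_mul_one_sub_rpow_eq_comp_rpow hp hτ.1), integral_const_mul,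
    integral_Ioo_comp_rpow hp (fun u => u ^ ((c + 1) / p - 1) * (1 - u) ^ (γ - 1)),
    ← integral_Ioc_eq_integral_Ioo, ← intervalIntegral.integral_of_le zero_le_one,
    integral_rpow_mul_one_sub_rpow ha hγ, inv_mul_eq_div]

end BetaSubstitution

lemma Gamma_mul_Gamma_div_Gamma_add_add_le {a a' b b' β : ℝ} (ha' : 0 < a') (haa : a' ≤ a)
    (hb' : 0 < b') (hbb : b' ≤ b) (hβ : 0 < β) :
    Real.Gamma a * Real.Gamma b / Real.Gamma (a + b + β) ≤
      beta a' b' * beta (a' + b') β / Real.Gamma β := by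
  have ha := ha'.trans_le haa
  have hb := hb'.trans_le hbb
  have hΓab := Real.Gamma_pos_of_pos (add_pos ha hb)
  have hΓβ := Real.Gamma_pos_of_pos hβ
  have hsplit : Real.Gamma a * Real.Gamma b / Real.Gamma (a + b + β) =
      beta a b * beta (a + b) β / Real.Gamma β := by
    simp only [beta]
    field_simp
  rw [hsplit]
  gcongr
  · exact (beta_pos (add_pos ha hb) hβ).le
  · exact (beta_pos ha' hb').le
  · exact beta_le_beta ha' haa hb' hbb
  · exact beta_le_beta (add_pos ha' hb') (add_le_add haa hbb) hβ le_rfl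

lemma integral_tsum_mul_of_nonneg {α : Type*} [MeasurableSpace α] {μ : Measure α}
    {a : ℕ → ℝ} {g : ℕ → α → ℝ} (hg : ∀ k, Integrable (g k) μ) (hg0 : ∀ k, 0 ≤ᵐ[μ] g k)
    (hs : Summable fun k => |a k * ∫ x, g k x ∂μ|) :
    ∫ x, ∑' k, a k * g k x ∂μ = ∑' k, a k * ∫ x, g k x ∂μ := by
  have hnorm (k : ℕ) : ∫ x, ‖a k * g k x‖ ∂μ = |a k * ∫ x, g k x ∂μ| := by
    rw [abs_mul, abs_of_nonneg (integral_nonneg_of_ae (hg0 k)), ← integral_const_mul]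
    refine integral_congr_ae ((hg0 k).mono fun x hx => ?_)
    change ‖a k * g k x‖ = |a k| * g k x
    rw [norm_mul, Real.norm_eq_abs, Real.norm_of_nonneg hx]
  simp_rw [← integral_const_mul]
  exact (integral_tsum_of_summable_integral_norm (fun k => (hg k).const_mul (a k))
    (hs.congr fun k => (hnorm k).symm)).symm

noncomputable def genBesselCoeff (p : ℝ) (x : ℝ × ℝ) (k : ℕ) : ℝ :=
  ∑ n ∈ Finset.range (k + 1),
    Real.Gamma ((2 * (n : ℝ) + 1) / p) * Real.Gamma ((2 * ((k - n : ℕ) : ℝ) + 1) / p) /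
        ((Nat.factorial (2 * n) : ℝ) * (Nat.factorial (2 * (k - n)) : ℝ)) *
      x.1 ^ (2 * n) * x.2 ^ (2 * (k - n))

noncomputable def genBesselTerm (p ω : ℝ) (x : ℝ × ℝ) (k : ℕ) : ℝ :=
  (-1) ^ k / Real.Gamma (2 / p * (k + 1) + ω) * genBesselCoeff p x k

noncomputable def genBesselPrefactor (p ω : ℝ) (x : ℝ × ℝ) : ℝ :=
  (pnorm p x / p) ^ ω * (2 / p) ^ 2 / Real.Gamma (1 / p) ^ 2

lemma genBesselJ_eq_tsum (p ω : ℝ) (x : ℝ × ℝ) :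
    genBesselJ p ω x = genBesselPrefactor p ω x * ∑' k, genBesselTerm p ω x k :=
  rfl

section BesselSeries

variable {p : ℝ} (x : ℝ × ℝ) (k : ℕ)

lemma genBesselCoeff_nonneg (hp : 0 < p) : 0 ≤ genBesselCoeff p x k := by
  refine Finset.sum_nonneg fun n _ => ?_
  have h1 := Real.Gamma_pos_of_pos (show 0 < (2 * (n : ℝ) + 1) / p by positivity)
  have h2 := Real.Gamma_pos_of_pos (show 0 < (2 * ((k - n : ℕ) : ℝ) + 1) / p by positivity)
  simp only [pow_mul]
  positivity

lemma genBesselCoeff_div_Gamma_le (hp : 0 < p) {β : ℝ} (hβ : 0 < β) :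
    genBesselCoeff p x k / Real.Gamma (2 / p * (k + 1) + β) ≤
      beta (1 / p) (1 / p) * beta (2 / p) β / Real.Gamma β *
        ∑ n ∈ Finset.range (k + 1),
          x.1 ^ (2 * n) / (2 * n).factorial *
            (x.2 ^ (2 * (k - n)) / (2 * (k - n)).factorial) := by
  rw [genBesselCoeff, Finset.sum_div, Finset.mul_sum]
  refine Finset.sum_le_sum fun n hn => ?_
  have hnk : n ≤ k := Finset.mem_range_succ_iff.mp hn
  have hsum : (2 * (n : ℝ) + 1) / p + (2 * ((k - n : ℕ) : ℝ) + 1) / p + β =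
      2 / p * (k + 1) + β := by
    rw [Nat.cast_sub hnk]
    field_simp
    ring
  have hΓ := Gamma_mul_Gamma_div_Gamma_add_add_le (a := (2 * (n : ℝ) + 1) / p)
    (b := (2 * ((k - n : ℕ) : ℝ) + 1) / p)
    (one_div_pos.2 hp) (by gcongr; linarith [n.cast_nonneg (α := ℝ)])
    (one_div_pos.2 hp) (by gcongr; linarith [(k - n).cast_nonneg (α := ℝ)]) hβ
  rw [hsum, show 1 / p + 1 / p = 2 / p by ring] at hΓ
  calc _ = Real.Gamma ((2 * (n : ℝ) + 1) / p) * Real.Gamma ((2 * ((k - n : ℕ) : ℝ) + 1) / p) /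
        Real.Gamma (2 / p * (k + 1) + β) *
          (x.1 ^ (2 * n) / (2 * n).factorial *
            (x.2 ^ (2 * (k - n)) / (2 * (k - n)).factorial)) := by
        ring
    _ ≤ _ := by
        gcongr
        simp only [pow_mul]
        positivity

lemma summable_abs_genBesselTerm (hp : 0 < p) {β : ℝ} (hβ : 0 < β) :
    Summable fun k => |genBesselTerm p β x k| := by
  have hcosh (y : ℝ) : Summable fun n => ‖y ^ (2 * n) / (2 * n).factorial‖ := by
    refine (Real.hasSum_cosh y).summable.congr fun n => ?_
    rw [Real.norm_of_nonneg (by simp only [pow_mul]; positivity)]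
  refine Summable.of_nonneg_of_le (fun k => abs_nonneg _) (fun k => ?_)
    (((summable_norm_sum_mul_range_of_summable_norm (hcosh x.1) (hcosh x.2)).of_norm).mul_left
      (beta (1 / p) (1 / p) * beta (2 / p) β / Real.Gamma β))
  have hΓ := Real.Gamma_pos_of_pos (show 0 < 2 / p * (k + 1) + β by positivity)
  rw [genBesselTerm, abs_mul, abs_div, abs_pow, abs_neg, abs_one, one_pow, abs_of_pos hΓ,
    abs_of_nonneg (genBesselCoeff_nonneg x k hp), one_div_mul_eq_div]
  exact genBesselCoeff_div_Gamma_le x k hp hβ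

end BesselSeries

section Scaling

variable {p ω τ : ℝ} (x : ℝ × ℝ)

lemma pnorm_nonneg : 0 ≤ pnorm p x := by
  unfold pnorm
  positivity

lemma pnorm_mul_left (hp : p ≠ 0) (hτ : 0 ≤ τ) :
    pnorm p (τ * x.1, τ * x.2) = τ * pnorm p x := by
  simp only [pnorm, abs_mul, abs_of_nonneg hτ]
  rw [Real.mul_rpow hτ (abs_nonneg _), Real.mul_rpow hτ (abs_nonneg _), ← mul_add,
    Real.mul_rpow (by positivity) (by positivity), ← Real.rpow_mul hτ, mul_one_div_cancel hp,
    Real.rpow_one]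

lemma genBesselPrefactor_mul_left (hp : 0 < p) (hτ : 0 ≤ τ) :
    genBesselPrefactor p ω (τ * x.1, τ * x.2) = τ ^ ω * genBesselPrefactor p ω x := by
  rw [genBesselPrefactor, genBesselPrefactor, pnorm_mul_left x hp.ne' hτ, mul_div_assoc τ,
    Real.mul_rpow hτ (div_nonneg (pnorm_nonneg x) hp.le)]
  ring

lemma genBesselPrefactor_add (hp : 0 < p) (hω : 0 ≤ ω) {γ : ℝ} (hγ : 0 ≤ γ) :
    genBesselPrefactor p (ω + γ) x =
      pnorm p x ^ γ / (p ^ (γ - 1) * p) * genBesselPrefactor p ω x := by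
  rw [genBesselPrefactor, genBesselPrefactor,
    Real.rpow_add_of_nonneg (div_nonneg (pnorm_nonneg x) hp.le) hω hγ,
    Real.div_rpow (pnorm_nonneg x) hp.le γ, Real.rpow_sub_one hp.ne',
    div_mul_cancel₀ _ hp.ne']
  ring

lemma genBesselCoeff_mul_left (k : ℕ) :
    genBesselCoeff p (τ * x.1, τ * x.2) k = τ ^ (2 * k) * genBesselCoeff p x k := by
  rw [genBesselCoeff, genBesselCoeff, Finset.mul_sum]
  refine Finset.sum_congr rfl fun n hn => ?_
  have hτk : τ ^ (2 * k) = τ ^ (2 * n) * τ ^ (2 * (k - n)) := by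
    rw [← pow_add, ← mul_add, Nat.add_sub_cancel' (Finset.mem_range_succ_iff.mp hn)]
  rw [hτk, mul_pow, mul_pow]
  ring

lemma genBesselTerm_mul_left (k : ℕ) :
    genBesselTerm p ω (τ * x.1, τ * x.2) k = τ ^ (2 * k) * genBesselTerm p ω x k := by
  rw [genBesselTerm, genBesselTerm, genBesselCoeff_mul_left]
  ring

lemma genBesselJ_mul_left_mul_rpow (hp : 0 < p) (hτ : 0 < τ) :
    genBesselJ p ω (τ * x.1, τ * x.2) * τ ^ ((p - 1) * ω + 1) =
      ∑' k : ℕ,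
        genBesselPrefactor p ω x * genBesselTerm p ω x k * τ ^ (2 * k + p * ω + 1 : ℝ) := by
  have hτpow (k : ℕ) :
      τ ^ (2 * k + p * ω + 1 : ℝ) = τ ^ ω * τ ^ (2 * k) * τ ^ ((p - 1) * ω + 1) := by
    rw [← Real.rpow_natCast, ← Real.rpow_add hτ, ← Real.rpow_add hτ]
    push_cast
    ring_nf
  simp_rw [genBesselJ_eq_tsum, genBesselPrefactor_mul_left x hp hτ.le, genBesselTerm_mul_left,
    hτpow, ← tsum_mul_left, ← tsum_mul_right]
  exact tsum_congr fun k => by ring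

end Scaling

lemma genBesselTerm_mul_beta {p ω : ℝ} (x : ℝ × ℝ) (hp : 0 < p) (hω : 0 ≤ ω) (γ : ℝ)
    (k : ℕ) :
    genBesselTerm p ω x k * beta (2 / p * (k + 1) + ω) γ =
      Real.Gamma γ * genBesselTerm p (ω + γ) x k := by
  have hΓ := Real.Gamma_pos_of_pos (show 0 < 2 / p * (k + 1) + ω by positivity)
  rw [genBesselTerm, genBesselTerm, beta, ← add_assoc]
  field_simp

lemma integral_genBesselJ_mul_left_mul_rpow {p ω γ : ℝ} (x : ℝ × ℝ) (hp : 0 < p)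
    (hω : 0 ≤ ω) (hγ : 0 < γ) :
    ∫ τ in (0 : ℝ)..1,
        genBesselJ p ω (τ * x.1, τ * x.2) * τ ^ ((p - 1) * ω + 1) * (1 - τ ^ p) ^ (γ - 1) =
      genBesselPrefactor p ω x * (Real.Gamma γ / p) * ∑' k, genBesselTerm p (ω + γ) x k := by
  set F : ℕ → ℝ → ℝ := fun k τ => τ ^ (2 * k + p * ω + 1 : ℝ) * (1 - τ ^ p) ^ (γ - 1)
  have hexp (k : ℕ) : -1 < (2 * k + p * ω + 1 : ℝ) := by
    have : 0 ≤ (2 * k + p * ω : ℝ) := by positivity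
    linarith
  have hF_nonneg (k : ℕ) : 0 ≤ᵐ[volume.restrict (Ioc 0 1)] F k :=
    (ae_restrict_iff' measurableSet_Ioc).2 (Filter.Eventually.of_forall fun τ hτ =>
      mul_nonneg (Real.rpow_nonneg hτ.1.le _)
        (Real.rpow_nonneg (sub_nonneg.2 (Real.rpow_le_one hτ.1.le hτ.2 hp.le)) _))
  have hterm (k : ℕ) :
      genBesselPrefactor p ω x * genBesselTerm p ω x k * ∫ τ in Ioc 0 1, F k τ =
        genBesselPrefactor p ω x * (Real.Gamma γ / p) * genBesselTerm p (ω + γ) x k := by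
    have harg : (2 * k + p * ω + 1 + 1) / p = 2 / p * (k + 1) + ω := by
      field_simp
      ring
    rw [integral_rpow_mul_one_sub_rpow_rpow hp (hexp k) hγ, harg]
    linear_combination genBesselPrefactor p ω x / p * genBesselTerm_mul_beta x hp hω γ k
  have hsummable : Summable fun k => |genBesselPrefactor p ω x * genBesselTerm p ω x k *
      ∫ τ in Ioc 0 1, F k τ| := by
    simp_rw [hterm, abs_mul _ (genBesselTerm _ _ _ _)]
    exact (summable_abs_genBesselTerm x hp (add_pos_of_nonneg_of_pos hω hγ)).mul_left _
  rw [intervalIntegral.integral_of_le zero_le_one, ← tsum_mul_left]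
  simp_rw [← hterm]
  rw [← integral_tsum_mul_of_nonneg
    (fun k => integrableOn_rpow_mul_one_sub_rpow_rpow hp (hexp k) hγ) hF_nonneg hsummable]
  refine setIntegral_congr_fun measurableSet_Ioc fun τ hτ => ?_
  rw [genBesselJ_mul_left_mul_rpow x hp hτ.1, ← tsum_mul_right]
  simp_rw [mul_assoc]

theorem genBesselJ_integral_recursion_general (p ω γ : ℝ) (hp : 0 < p)
    (hω : 0 ≤ ω) (hγ : 0 < γ) (x : ℝ × ℝ) :
    genBesselJ p (ω + γ) x =
      (pnorm p x) ^ γ / (p ^ (γ - 1) * Real.Gamma γ) *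
        ∫ τ in (0 : ℝ)..1,
          genBesselJ p ω (τ * x.1, τ * x.2) * τ ^ ((p - 1) * ω + 1) * (1 - τ ^ p) ^ (γ - 1) := by
  have hΓγ := (Real.Gamma_pos_of_pos hγ).ne'
  rw [integral_genBesselJ_mul_left_mul_rpow x hp hω hγ, genBesselJ_eq_tsum,
    genBesselPrefactor_add x hp hω hγ.le]
  field_simp

theorem genBesselJ_integral_recursion (p ω γ : ℝ) (hp : 0 < p)
    (hq : ∃ q : ℕ, (q : ℝ) = 2 / p) (hω : 0 ≤ ω) (hγ : 0 < γ) (x : ℝ × ℝ) (hx : x ≠ 0) :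
    genBesselJ p (ω + γ) x =
      (pnorm p x) ^ γ / (p ^ (γ - 1) * Real.Gamma γ) *
        ∫ τ in (0 : ℝ)..1,
          genBesselJ p ω (τ * x.1, τ * x.2) * τ ^ ((p - 1) * ω + 1) * (1 - τ ^ p) ^ (γ - 1) :=
  genBesselJ_integral_recursion_general p ω γ hp hω hγ x
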